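/- arXiv:1010.3455 — 2 statements merged into one kernel-verified Lean document; each statement's English description precedes it below -/
import Mathlib

section
/- Let K be a field and M a finite J-trivial monoid. For x ∈ M let S_x denote the one-dimensional right MonoidAlgebra K M-module with basis ε_x and action ε_x · y = ε_x if x·y = x and 0 otherwise (y ∈ M). Then the modules S_e, for e ranging over the idempotents of M, form a complete set of pairwise non-isomorphic representatives of the isomorphism classes of simple right MonoidAlgebra K M-modules: for idempotents e, f, S_e ≅ S_f implies e = f, and every simple right MonoidAlgebra K M-module is isomorphic to S_e for some idempotent e of M. -/
/-- The `J`-preorder on a monoid: `x ≤_J y` iff `x = u * y * v` for some `u, v`. -/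
def leJ {M : Type*} [Monoid M] (x y : M) : Prop := ∃ u v : M, x = u * y * v

/-- A monoid is `J`-trivial if `M x M = M y M` implies `x = y`. -/
def JTrivial (M : Type*) [Monoid M] : Prop :=
  ∀ x y : M, {z : M | ∃ u v : M, z = u * x * v} = {z : M | ∃ u v : M, z = u * y * v} → x = y

open Classical

/-- `N` realizes the right module `S_x`: it has a nonzero vector `ε` spanning it over `K`
(where `K` acts through the central embedding `K → K[M]`), on which each `y ∈ M` acts by
`ε · y = ε` if `x * y = x` and `ε · y = 0` otherwise.  Right `K[M]`-modules are formalized as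
modules over the opposite algebra. -/
def IsSx (K : Type*) {M : Type*} [Field K] [Monoid M] (x : M)
    (N : Type*) [AddCommGroup N] [Module (MonoidAlgebra K M)ᵐᵒᵖ N] : Prop :=
  ∃ ε : N, ε ≠ 0 ∧
    (∀ w : N, ∃ c : K,
      w = MulOpposite.op (algebraMap K (MonoidAlgebra K M) c) • ε) ∧
    (∀ y : M, MulOpposite.op ((MonoidAlgebra.of K M) y) • ε
        = if x * y = x then ε else 0)

/-! In a `J`-trivial monoid, `e * (y * z) = e` forces `e * y = e` and `e * z = e`, so for each
`e` the indicator of `{y | e * y = e}` is a character `M → K`, and `S_e` is `K` with `M` acting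
through it; a one-dimensional module is simple. Conversely, in a simple module `N` pick `e`
`J`-minimal among the elements acting nontrivially and `w` with `w • e ≠ 0`: every `e * y` with
`e * y ≠ e` lies strictly `J`-below `e`, hence kills `N`, so `v = w • e` spans a copy of `S_e`,
which is all of `N`. Finally `S_e ≅ S_f` means `e * y = e ↔ f * y = f` for all `y`; taking
`y = f` and `y = e` gives `e ≤_J f ≤_J e`. -/

theorem leJ_trans {M : Type*} [Monoid M] {x y z : M} (hxy : leJ x y) (hyz : leJ y z) :
    leJ x z := by
  obtain ⟨a, b, rfl⟩ := hxy
  obtain ⟨c, d, rfl⟩ := hyz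
  exact ⟨a * c, d * b, by simp only [mul_assoc]⟩

namespace JTrivial

variable {M : Type*} [Monoid M]

theorem leJ_antisymm (hJ : JTrivial M) {x y : M} (hxy : leJ x y) (hyx : leJ y x) : x = y :=
  hJ x y <| subset_antisymm (fun _ h => leJ_trans h hxy) (fun _ h => leJ_trans h hyx)

theorem exists_minimal_leJ [Finite M] (hJ : JTrivial M) {C : Set M} (hC : C.Nonempty) :
    ∃ x ∈ C, ∀ z ∈ C, leJ z x → z = x := by
  obtain ⟨x, hxC, hmin⟩ :=
    Set.Finite.exists_minimalFor (fun x => {z : M | ∃ u v : M, z = u * x * v}) C C.toFinite hC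
  refine ⟨x, hxC, fun z hzC hzx => ?_⟩
  have hsub : {w : M | ∃ u v : M, w = u * z * v} ⊆ {w : M | ∃ u v : M, w = u * x * v} :=
    fun _ h => leJ_trans h hzx
  exact hJ z x (subset_antisymm hsub (hmin hzC hsub))

theorem mul_mul_eq_self_iff (hJ : JTrivial M) {e y z : M} :
    e * (y * z) = e ↔ e * y = e ∧ e * z = e := by
  refine ⟨fun h => ?_, fun ⟨hy, hz⟩ => by rw [← mul_assoc, hy, hz]⟩
  have hy : e * y = e :=
    hJ.leJ_antisymm ⟨1, y, by rw [one_mul]⟩ ⟨1, z, by rw [one_mul, mul_assoc, h]⟩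
  exact ⟨hy, by rwa [← mul_assoc, hy] at h⟩

theorem eq_of_forall_mul_eq_self_iff (hJ : JTrivial M) {e f : M} (he : IsIdempotentElem e)
    (hf : IsIdempotentElem f) (h : ∀ y, e * y = e ↔ f * y = f) : e = f :=
  hJ.leJ_antisymm ⟨e, 1, by rw [mul_one, (h f).mpr hf]⟩ ⟨f, 1, by rw [mul_one, (h e).mp he]⟩

noncomputable def fixChar (hJ : JTrivial M) (K : Type*) [MulZeroOneClass K] (e : M) :
    M →* K where
  toFun y := if e * y = e then 1 else 0
  map_one' := by simp
  map_mul' y z := by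
    simp only [hJ.mul_mul_eq_self_iff]
    split_ifs <;> simp_all

theorem fixChar_apply (hJ : JTrivial M) (K : Type*) [MulZeroOneClass K] (e y : M) :
    hJ.fixChar K e y = if e * y = e then 1 else 0 :=
  rfl

end JTrivial

section RightModule

open MulOpposite MonoidAlgebra

variable {K : Type*} [Field K] {M : Type*} [Monoid M]
  {N : Type*} [AddCommGroup N] [Module (MonoidAlgebra K M)ᵐᵒᵖ N]

theorem op_algebraMap_smul_comm (c : K) (a : MonoidAlgebra K M) (v : N) :
    op (algebraMap K (MonoidAlgebra K M) c) • op a • v =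
      op a • op (algebraMap K (MonoidAlgebra K M) c) • v := by
  rw [← mul_smul, ← mul_smul, ← op_mul, ← op_mul, Algebra.commutes]

theorem op_of_smul_op_of_smul (x y : M) (v : N) :
    op (of K M y) • op (of K M x) • v = op (of K M (x * y)) • v := by
  rw [← mul_smul, ← op_mul, ← map_mul]

theorem op_smul_eq_of_forall_op_of_smul {χ : M →* K} {v : N}
    (hv : ∀ y, op (of K M y) • v = op (algebraMap K (MonoidAlgebra K M) (χ y)) • v)
    (a : MonoidAlgebra K M) :
    op a • v = op (algebraMap K (MonoidAlgebra K M) (lift K K M χ a)) • v := by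
  induction a using MonoidAlgebra.induction_on with
  | of y => rw [lift_of, hv]
  | add a b ha hb => rw [op_add, add_smul, ha, hb, map_add, map_add, op_add, add_smul]
  | smul c a ha =>
    rw [map_smul, smul_eq_mul, mul_comm, map_mul, op_mul, mul_smul, ← ha, Algebra.smul_def,
      op_mul, mul_smul, op_algebraMap_smul_comm]

theorem IsSx.op_of_smul {x : M} (h : IsSx K x N) (y : M) (v : N) :
    op (of K M y) • v = if x * y = x then v else 0 := by
  obtain ⟨ε, -, hspan, hact⟩ := h
  obtain ⟨c, rfl⟩ := hspan v
  rw [← op_algebraMap_smul_comm, hact]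
  split_ifs <;> simp

theorem IsSx.isSimpleModule {x : M} (h : IsSx K x N) :
    IsSimpleModule (MonoidAlgebra K M)ᵐᵒᵖ N := by
  obtain ⟨ε, hε, hspan, -⟩ := h
  refine isSimpleModule_iff_toSpanSingleton_surjective.mpr ⟨⟨ε, 0, hε⟩, fun v hv w => ?_⟩
  obtain ⟨c, rfl⟩ := hspan v
  obtain ⟨d, rfl⟩ := hspan w
  have hc : c ≠ 0 := by rintro rfl; simp at hv
  refine ⟨op (algebraMap K (MonoidAlgebra K M) (c⁻¹ * d)), ?_⟩
  rw [LinearMap.toSpanSingleton_apply, ← mul_smul, ← op_mul, ← map_mul, ← mul_assoc,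
    mul_inv_cancel₀ hc, one_mul]

theorem isSx_of_isSimpleModule [IsSimpleModule (MonoidAlgebra K M)ᵐᵒᵖ N] (hJ : JTrivial M)
    {e : M} {v : N} (hv0 : v ≠ 0) (hv : ∀ y, op (of K M y) • v = if e * y = e then v else 0) :
    IsSx K e N := by
  have hχ (y : M) :
      op (of K M y) • v = op (algebraMap K (MonoidAlgebra K M) (hJ.fixChar K e y)) • v := by
    rw [hv, hJ.fixChar_apply]
    split_ifs <;> simp only [map_one, op_one, one_smul, map_zero, op_zero, zero_smul]
  refine ⟨v, hv0, fun w => ?_, hv⟩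
  obtain ⟨a, rfl⟩ := (Submodule.mem_span_singleton (R := (MonoidAlgebra K M)ᵐᵒᵖ)).mp
    ((IsSimpleModule.span_singleton_eq_top _ hv0).ge (Submodule.mem_top (x := w)))
  exact ⟨_, op_smul_eq_of_forall_op_of_smul hχ a.unop⟩

theorem exists_isSx_of_isSimpleModule [Finite M] [IsSimpleModule (MonoidAlgebra K M)ᵐᵒᵖ N]
    (hJ : JTrivial M) : ∃ e : M, IsIdempotentElem e ∧ IsSx K e N := by
  have := IsSimpleModule.nontrivial (MonoidAlgebra K M)ᵐᵒᵖ N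
  obtain ⟨w₀, hw₀⟩ := exists_ne (0 : N)
  obtain ⟨e, ⟨w, hw⟩, hmin⟩ :=
    hJ.exists_minimal_leJ (C := {z | ∃ w : N, op (of K M z) • w ≠ 0})
      ⟨1, w₀, by rwa [map_one, op_one, one_smul]⟩
  have hv (y : M) :
      op (of K M y) • op (of K M e) • w = if e * y = e then op (of K M e) • w else 0 := by
    rw [op_of_smul_op_of_smul]
    split_ifs with hy
    · rw [hy]
    · by_contra hne
      exact hy (hmin _ ⟨w, hne⟩ ⟨1, y, by rw [one_mul]⟩)
  have hSe := isSx_of_isSimpleModule hJ hw hv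
  refine ⟨e, ?_, hSe⟩
  by_contra hee
  exact hw (by rw [hSe.op_of_smul, if_neg (show ¬e * e = e from hee)])

theorem IsSx.eq_of_isSx (hJ : JTrivial M) {e f : M} (he : IsIdempotentElem e)
    (hf : IsIdempotentElem f) (hSe : IsSx K e N) (hSf : IsSx K f N) : e = f := by
  obtain ⟨ε, hε, -⟩ := id hSe
  refine hJ.eq_of_forall_mul_eq_self_iff he hf fun y => ?_
  have := (hSe.op_of_smul y ε).symm.trans (hSf.op_of_smul y ε)
  split_ifs at this <;> simp_all

noncomputable abbrev characterModule (χ : M →* K) : Module (MonoidAlgebra K M)ᵐᵒᵖ K :=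
  Module.compHom K (RingHom.fromOpposite (lift K K M χ).toRingHom fun _ _ => .all _ _)

theorem isSx_characterModule (hJ : JTrivial M) (e : M) :
    letI := characterModule (hJ.fixChar K e); IsSx K e K := by
  let := characterModule (hJ.fixChar K e)
  refine ⟨1, one_ne_zero, fun c => ⟨c, ?_⟩, fun y => ?_⟩
  · change c = lift K K M _ (algebraMap K (MonoidAlgebra K M) c) * 1
    rw [AlgHom.commutes, mul_one]
    rfl
  · change lift K K M _ (of K M y) * 1 = _
    rw [lift_of, mul_one, hJ.fixChar_apply]

end RightModule

/-- For a field `K` and a finite `J`-trivial monoid `M`, the modules `S_e`, for `e` ranging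
over the idempotents of `M`, form a complete set of pairwise non-isomorphic representatives of
the isomorphism classes of simple right `K[M]`-modules: if some module realizes both `S_e` and
`S_f` for idempotents `e, f`, then `e = f`; each `S_e` is realized by a simple right module;
and every simple right `K[M]`-module realizes `S_e` for some idempotent `e`. -/
theorem simple_modules_indexed_by_idempotents (K : Type u) [Field K] {M : Type u}
    [Monoid M] [Fintype M] (hJ : JTrivial M) :
    (∀ e f : M, IsIdempotentElem e → IsIdempotentElem f →
      ∀ (N : Type u) [AddCommGroup N] [Module (MonoidAlgebra K M)ᵐᵒᵖ N],
        IsSx K e N → IsSx K f N → e = f) ∧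
    (∀ e : M, IsIdempotentElem e →
      ∃ (N : Type u) (iN : AddCommGroup N)
        (iM : @Module (MonoidAlgebra K M)ᵐᵒᵖ N _ iN.toAddCommMonoid),
        @IsSx K M _ _ e N iN iM ∧ @IsSimpleModule (MonoidAlgebra K M)ᵐᵒᵖ _ N iN iM) ∧
    (∀ (N : Type u) [AddCommGroup N] [Module (MonoidAlgebra K M)ᵐᵒᵖ N],
      IsSimpleModule (MonoidAlgebra K M)ᵐᵒᵖ N →
      ∃ e : M, IsIdempotentElem e ∧ IsSx K e N) := by
  refine ⟨fun e f he hf N _ _ => IsSx.eq_of_isSx hJ he hf, fun e _ => ?_,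
    fun N _ _ _ => exists_isSx_of_isSimpleModule hJ⟩
  let := characterModule (hJ.fixChar K e)
  exact ⟨K, _, _, isSx_characterModule hJ e, (isSx_characterModule hJ e).isSimpleModule⟩
end

section
/- Let M be a finite J-trivial monoid and x ∈ M. Then the set rAut(x) := {u ∈ M : x·u = x} is a submonoid of M, and there exists a unique idempotent rfix(x) ∈ M such that rAut(x) = {u ∈ M : rfix(x) ≤_J u}; in particular rfix(x) is the minimum, with respect to ≤_J, of the idempotents e with x·e = x. Symmetrically, {u ∈ M : u·x = x} is a submonoid and there exists a unique idempotent lfix(x) with {u ∈ M : u·x = x} = {u ∈ M : lfix(x) ≤_J u}. -/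
/-!
In a finite `J`-trivial monoid every submonoid `S` has an element `e` with `e * S = {e}`: take
`e ∈ S` whose principal two-sided ideal is minimal, since `e * u ≤_J e` and `e * u ∈ S` force
`e * u = e`. Applied to `S = rAut x`, this makes `e` idempotent and below every `u ∈ rAut x`.
Conversely, if `x * e = x` and `e = a * u * b`, then `x = (x * a) * u * b` lies `J`-below `x * a`
and `x * a * u`, so `J`-triviality gives `x * a = x` and then `x * u = x`. The left-hand
statements are the right-hand ones in the opposite monoid.
-/

open MulOpposite

section Monoid

variable {M : Type*} [Monoid M] {a b c : M}

theorem leJ_refl (a : M) : leJ a a := ⟨1, 1, by simp⟩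

theorem leJ_trans_s11 (hab : leJ a b) (hbc : leJ b c) : leJ a c := by
  obtain ⟨u, v, rfl⟩ := hab
  obtain ⟨u', v', rfl⟩ := hbc
  exact ⟨u * u', v' * v, by simp only [mul_assoc]⟩

theorem leJ_mul_right (a b : M) : leJ (a * b) a := ⟨1, b, by simp⟩

theorem leJ_op : leJ (op a) (op b) ↔ leJ a b := by
  constructor
  · rintro ⟨u, v, h⟩
    exact ⟨unop v, unop u, by simpa [mul_assoc] using congrArg unop h⟩
  · rintro ⟨u, v, rfl⟩
    exact ⟨op v, op u, by simp [mul_assoc]⟩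

theorem jTrivial_iff_leJ_antisymm :
    JTrivial M ↔ ∀ a b : M, leJ a b → leJ b a → a = b := by
  constructor
  · intro hJ a b hab hba
    exact hJ a b (Set.ext fun z => ⟨fun hz => leJ_trans_s11 hz hab, fun hz => leJ_trans_s11 hz hba⟩)
  · intro h a b hab
    have hab' : leJ a b := (Set.ext_iff.1 hab a).1 (leJ_refl a)
    have hba' : leJ b a := (Set.ext_iff.1 hab b).2 (leJ_refl b)
    exact h a b hab' hba'

theorem JTrivial.antisymm (hJ : JTrivial M) (hab : leJ a b) (hba : leJ b a) : a = b :=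
  jTrivial_iff_leJ_antisymm.1 hJ a b hab hba

theorem JTrivial.op (hJ : JTrivial M) : JTrivial Mᵐᵒᵖ :=
  jTrivial_iff_leJ_antisymm.2 fun _ _ hab hba =>
    unop_injective <| hJ.antisymm (leJ_op.1 hab) (leJ_op.1 hba)

theorem JTrivial.eq_of_setOf_leJ_eq (hJ : JTrivial M) (h : {u | leJ a u} = {u | leJ b u}) :
    a = b :=
  hJ.antisymm ((Set.ext_iff.1 h b).2 (leJ_refl b)) ((Set.ext_iff.1 h a).1 (leJ_refl a))

theorem JTrivial.mul_eq_self_of_leJ (hJ : JTrivial M) {x e u : M} (hxe : x * e = x)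
    (heu : leJ e u) : x * u = x := by
  obtain ⟨a, b, rfl⟩ := heu
  have hxa : x * a = x :=
    hJ.antisymm (leJ_mul_right x a) ⟨1, u * b, hxe.symm.trans (by simp only [one_mul, mul_assoc])⟩
  rw [← mul_assoc, ← mul_assoc, hxa] at hxe
  exact hJ.antisymm (leJ_mul_right x u) ⟨1, b, by rw [one_mul, hxe]⟩

theorem JTrivial.exists_mem_forall_mul_eq [Finite M] (hJ : JTrivial M) (S : Submonoid M) :
    ∃ e ∈ S, ∀ u ∈ S, e * u = e := by
  obtain ⟨e, heS, hmin⟩ := (S : Set M).toFinite.exists_minimalFor (fun a => {z | leJ z a}) _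
    ⟨1, S.one_mem⟩
  refine ⟨e, heS, fun u hu => ?_⟩
  have hle : {z | leJ z (e * u)} ⊆ {z | leJ z e} := fun z hz => leJ_trans_s11 hz (leJ_mul_right e u)
  exact hJ _ _ ((hmin (S.mul_mem heS hu) hle).antisymm' hle)

def rAut (x : M) : Submonoid M where
  carrier := {u | x * u = x}
  one_mem' := mul_one x
  mul_mem' {u v} (hu : x * u = x) (hv : x * v = x) := show x * (u * v) = x by
    rw [← mul_assoc, hu, hv]

def lAut (x : M) : Submonoid M where
  carrier := {u | u * x = x}
  one_mem' := one_mul x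
  mul_mem' {u v} (hu : u * x = x) (hv : v * x = x) := show u * v * x = x by
    rw [mul_assoc, hv, hu]

theorem JTrivial.exists_rfix [Finite M] (hJ : JTrivial M) (x : M) :
    ∃ e, IsIdempotentElem e ∧ ∀ u, x * u = x ↔ leJ e u := by
  obtain ⟨e, he, habs⟩ := hJ.exists_mem_forall_mul_eq (rAut x)
  refine ⟨e, habs e he, fun u => ⟨fun hu => ⟨e, 1, ?_⟩, hJ.mul_eq_self_of_leJ he⟩⟩
  rw [mul_one, habs u hu]

theorem JTrivial.exists_lfix [Finite M] (hJ : JTrivial M) (x : M) :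
    ∃ e, IsIdempotentElem e ∧ ∀ u, u * x = x ↔ leJ e u := by
  have : Finite Mᵐᵒᵖ := Finite.of_injective unop unop_injective
  obtain ⟨e, he, hfix⟩ := hJ.op.exists_rfix (MulOpposite.op x)
  refine ⟨unop e, congrArg unop he, fun u => ?_⟩
  rw [← leJ_op, op_unop, ← hfix, ← op_mul, op_inj]

end Monoid

/-- In a finite `J`-trivial monoid, for any `x` the set `rAut(x) = {u | x * u = x}` is a
submonoid, and there is a unique idempotent `rfix x` with `rAut(x) = {u | rfix x ≤_J u}`;
in particular `rfix x` is the `≤_J`-minimum of the idempotents `e` with `x * e = x`.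
Symmetrically on the left. -/
theorem rAut_submonoid_and_rfix {M : Type*} [Monoid M] [Fintype M] (hJ : JTrivial M)
    (x : M) :
    (∃ S : Submonoid M, (S : Set M) = {u : M | x * u = x}) ∧
    (∃! e : M, IsIdempotentElem e ∧ {u : M | x * u = x} = {u : M | leJ e u}) ∧
    (∀ e : M, (IsIdempotentElem e ∧ {u : M | x * u = x} = {u : M | leJ e u}) →
      x * e = x ∧ ∀ f : M, IsIdempotentElem f → x * f = x → leJ e f) ∧
    (∃ S : Submonoid M, (S : Set M) = {u : M | u * x = x}) ∧
    (∃! e : M, IsIdempotentElem e ∧ {u : M | u * x = x} = {u : M | leJ e u}) ∧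
    (∀ e : M, (IsIdempotentElem e ∧ {u : M | u * x = x} = {u : M | leJ e u}) →
      e * x = x ∧ ∀ f : M, IsIdempotentElem f → f * x = x → leJ e f) := by
  obtain ⟨e, he, hr⟩ := hJ.exists_rfix x
  obtain ⟨e', he', hl⟩ := hJ.exists_lfix x
  refine ⟨⟨rAut x, rfl⟩, ⟨e, ⟨he, Set.ext hr⟩, fun f hf => ?_⟩, fun f hf => ?_,
    ⟨lAut x, rfl⟩, ⟨e', ⟨he', Set.ext hl⟩, fun f hf => ?_⟩, fun f hf => ?_⟩
  · exact hJ.eq_of_setOf_leJ_eq (hf.2.symm.trans (Set.ext hr))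
  · exact ⟨(Set.ext_iff.1 hf.2 f).2 (leJ_refl f), fun g _ hg => (Set.ext_iff.1 hf.2 g).1 hg⟩
  · exact hJ.eq_of_setOf_leJ_eq (hf.2.symm.trans (Set.ext hl))
  · exact ⟨(Set.ext_iff.1 hf.2 f).2 (leJ_refl f), fun g _ hg => (Set.ext_iff.1 hf.2 g).1 hg⟩
end
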